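/- Let T > 0, r ∈ ℝ, γ > 0 with γ ≠ 1, λ ≥ 0, ρ ∈ (−1,1), and let μ, σ, m, ν : [0,T] × ℝ → ℝ be continuous with σ(t,x) > 0, and let u : [0,T] × ℝ → ℝ be continuous. Suppose φ̄ : [0,T] × ℝ → ℝ admits continuous partial derivatives ∂φ̄/∂t, φ̄_x, φ̄_{xx} and satisfies, for all (t,x), ∂φ̄/∂t + (1−γ)r + m(t,x)φ̄_x + (1/2)ν(t,x)²(φ̄_{xx} + φ̄_x²) + (1−γ)[(μ(t,x)−r)u(t,x) − (γ/2)σ(t,x)²u(t,x)² + ρσ(t,x)ν(t,x)u(t,x)φ̄_x] = 0, with φ̄(T,x) = 0. Define J(t,w,x) = (w^{1−γ} exp(φ̄(t,x) − λ(1−γ)(T−t)/2) − 1)/(1−γ) for w > 0. Then for all t ∈ [0,T), w > 0, x ∈ ℝ: ∂J/∂t + (r + (μ(t,x)−r)u(t,x)) w J_w + (1/2)σ(t,x)²(u(t,x)² + λ/(γσ(t,x)²)) w² J_{ww} + m(t,x) J_x + (1/2)ν(t,x)² J_{xx} + ρν(t,x)σ(t,x)u(t,x) w J_{wx} = 0,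 and J(T,w,x) = (w^{1−γ}−1)/(1−γ). -/

import Mathlib

open Real Set

/-- The Feynman–Kac (policy evaluation) operator applied to `J` for the Gaussian feedback
policy with mean `u(t,x)` and variance `λ/(γσ(t,x)²)`, with partial derivatives via `deriv`. -/
noncomputable def FKterm (J : ℝ → ℝ → ℝ → ℝ) (μ σ m ν u : ℝ → ℝ → ℝ)
    (r γ lam ρ : ℝ) (t w x : ℝ) : ℝ :=
  deriv (fun s => J s w x) t
    + (r + (μ t x - r) * u t x) * w * deriv (fun w' => J t w' x) w
    + (1/2) * (σ t x)^2 * ((u t x)^2 + lam / (γ * (σ t x)^2)) * w^2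
        * deriv (fun w' => deriv (fun w'' => J t w'' x) w') w
    + m t x * deriv (fun y => J t w y) x
    + (1/2) * (ν t x)^2 * deriv (fun y => deriv (fun y' => J t w y') y) x
    + ρ * ν t x * σ t x * u t x * w * deriv (fun y => deriv (fun w' => J t w' y) w) x

/-!
Write `J = (w^{1-γ} e^ψ - 1)/(1-γ)` with `ψ = φ̄ - λ(1-γ)(T-t)/2`. Every derivative occurring in
the Feynman–Kac operator is `w^{1-γ} e^ψ/(1-γ)` times a factor free of `w` (e.g. `w J_w` gives
`1-γ` and `w² J_ww` gives `-γ(1-γ)`), so the operator is `w^{1-γ} e^ψ/(1-γ)` times the left-hand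
side of the PDE for `φ̄`. The variance `λ/(γσ²)` of the policy contributes exactly `-λ(1-γ)/2`,
which cancels the time derivative of the discount in `ψ`.
-/

theorem hasDerivAt_const_mul_exp_sub_one_div {f : ℝ → ℝ} {f' y : ℝ} (hf : HasDerivAt f f' y)
    (c a : ℝ) :
    HasDerivAt (fun y => (c * exp (f y) - 1) / a) (c * exp (f y) * f' / a) y :=
  ((hf.exp.const_mul c).sub_const 1).div_const a |>.congr_deriv (by ring)

theorem hasDerivAt_rpow_mul_const_sub_one_div {a w : ℝ} (ha : a ≠ 0) (hw : w ≠ 0) (c : ℝ) :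
    HasDerivAt (fun w => (w ^ a * c - 1) / a) (w ^ (a - 1) * c) w :=
  (((hasDerivAt_rpow_const (Or.inl hw)).mul_const c).sub_const 1).div_const a
    |>.congr_deriv (by field_simp)

theorem deriv_deriv_rpow_mul_const_sub_one_div {a w : ℝ} (ha : a ≠ 0) (hw : w ≠ 0) (c : ℝ) :
    deriv (fun w => deriv (fun w' => (w' ^ a * c - 1) / a) w) w
      = (a - 1) * w ^ (a - 1 - 1) * c := by
  have hderiv : (fun w => deriv (fun w' => (w' ^ a * c - 1) / a) w)
      =ᶠ[nhds w] fun w => w ^ (a - 1) * c := by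
    filter_upwards [isOpen_ne.mem_nhds hw] with w' hw'
    exact (hasDerivAt_rpow_mul_const_sub_one_div ha hw' c).deriv
  rw [hderiv.deriv_eq]
  exact ((hasDerivAt_rpow_const (Or.inl hw)).mul_const c).deriv

theorem FKterm_eq_of_eq_rpow_mul_exp {J : ℝ → ℝ → ℝ → ℝ} {ψ : ℝ → ℝ → ℝ} {a : ℝ}
    (ha : a ≠ 0) (hJ : ∀ t w x, J t w x = (w ^ a * exp (ψ t x) - 1) / a)
    (μ σ m ν u : ℝ → ℝ → ℝ) (r γ lam ρ : ℝ) {t w x ψt ψxx : ℝ} {ψx : ℝ → ℝ} (hw : w ≠ 0)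
    (hψt : HasDerivAt (fun s => ψ s x) ψt t) (hψx : ∀ y, HasDerivAt (fun y => ψ t y) (ψx y) y)
    (hψxx : HasDerivAt ψx ψxx x) :
    FKterm J μ σ m ν u r γ lam ρ t w x = w ^ a * exp (ψ t x) / a *
      (ψt + m t x * ψx x + (1/2) * (ν t x)^2 * (ψxx + (ψx x)^2)
        + a * (r + (μ t x - r) * u t x
          + (1/2) * (σ t x)^2 * ((u t x)^2 + lam / (γ * (σ t x)^2)) * (a - 1)
          + ρ * ν t x * σ t x * u t x * ψx x)) := by
  obtain rfl : J = fun t w x => (w ^ a * exp (ψ t x) - 1) / a := by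
    funext t w x; exact hJ t w x
  have hJx : (fun y => deriv (fun y' => (w ^ a * exp (ψ t y') - 1) / a) y)
      = fun y => w ^ a * exp (ψ t y) * ψx y / a :=
    funext fun y => (hasDerivAt_const_mul_exp_sub_one_div (hψx y) _ a).deriv
  have hJw : (fun y => deriv (fun w' => (w' ^ a * exp (ψ t y) - 1) / a) w)
      = fun y => w ^ (a - 1) * exp (ψ t y) :=
    funext fun y => (hasDerivAt_rpow_mul_const_sub_one_div ha hw _).deriv
  have hJxx : HasDerivAt (fun y => w ^ a * exp (ψ t y) * ψx y / a)
      ((w ^ a * (exp (ψ t x) * ψx x) * ψx x + w ^ a * exp (ψ t x) * ψxx) / a) x :=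
    (((hψx x).exp.const_mul (w ^ a)).mul hψxx).div_const a
  have hJwx : HasDerivAt (fun y => w ^ (a - 1) * exp (ψ t y))
      (w ^ (a - 1) * (exp (ψ t x) * ψx x)) x :=
    (hψx x).exp.const_mul _
  simp only [FKterm]
  rw [(hasDerivAt_const_mul_exp_sub_one_div hψt _ a).deriv,
    (hasDerivAt_rpow_mul_const_sub_one_div ha hw _).deriv,
    deriv_deriv_rpow_mul_const_sub_one_div ha hw,
    (hasDerivAt_const_mul_exp_sub_one_div (hψx x) _ a).deriv, hJx, hJxx.deriv, hJw, hJwx.deriv]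
  simp only [rpow_sub_one hw]
  field_simp
  ring

theorem stmt2_general
    (T r γ lam ρ : ℝ) (hγ : 0 < γ) (hγ1 : γ ≠ 1)
    (μ σ m ν u : ℝ → ℝ → ℝ)
    (hσpos : ∀ t x, 0 < σ t x)
    (φ φt φx φxx : ℝ → ℝ → ℝ)
    (hφt : ∀ t x, HasDerivAt (fun s => φ s x) (φt t x) t)
    (hφx : ∀ t x, HasDerivAt (fun y => φ t y) (φx t x) x)
    (hφxx : ∀ t x, HasDerivAt (fun y => φx t y) (φxx t x) x)
    (hPDE : ∀ t ∈ Set.Icc 0 T, ∀ x : ℝ,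
      φt t x + (1 - γ) * r + m t x * φx t x
        + (1/2) * (ν t x)^2 * (φxx t x + (φx t x)^2)
        + (1 - γ) * ((μ t x - r) * u t x - (γ / 2) * (σ t x)^2 * (u t x)^2
            + ρ * σ t x * ν t x * u t x * φx t x) = 0)
    (hterm : ∀ x : ℝ, φ T x = 0)
    (J : ℝ → ℝ → ℝ → ℝ)
    (hJ : ∀ t w x, J t w x =
      (w ^ (1 - γ) * Real.exp (φ t x - lam * (1 - γ) * (T - t) / 2) - 1) / (1 - γ)) :
    ∀ t ∈ Set.Ico 0 T, ∀ w : ℝ, 0 < w → ∀ x : ℝ,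
      FKterm J μ σ m ν u r γ lam ρ t w x = 0 ∧
      J T w x = (w ^ (1 - γ) - 1) / (1 - γ) := by
  intro t ht w hw x
  refine ⟨?_, by rw [hJ, hterm, sub_self, mul_zero, zero_div, sub_zero, exp_zero, mul_one]⟩
  have h1γ : 1 - γ ≠ 0 := sub_ne_zero.mpr hγ1.symm
  have hψt : HasDerivAt (fun s => φ s x - lam * (1 - γ) * (T - s) / 2)
      (φt t x + lam * (1 - γ) / 2) t :=
    ((hφt t x).sub ((((hasDerivAt_id t).const_sub T).const_mul _).div_const 2)).congr_deriv
      (by ring)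
  rw [FKterm_eq_of_eq_rpow_mul_exp h1γ hJ μ σ m ν u r γ lam ρ hw.ne' hψt
    (fun y => (hφx t y).sub_const _) (hφxx t x)]
  convert mul_zero _ using 2
  rw [← hPDE t (Ico_subset_Icc_self ht) x]
  field_simp [(hσpos t x).ne', hγ.ne']
  ring

/-- Theorem 2(i) (PDE verification): the candidate value function
`J(t,w,x) = (w^{1−γ} exp(φ̄(t,x) − λ(1−γ)(T−t)/2) − 1)/(1−γ)` built from a classical
solution `φ̄` of the linear PDE (13) solves the policy evaluation PDE for the Gaussian
feedback policy with mean `u` and variance `λ/(γσ²)`, with CRRA terminal condition. -/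
theorem stmt2
    (T r γ lam ρ : ℝ) (hT : 0 < T) (hγ : 0 < γ) (hγ1 : γ ≠ 1) (hlam : 0 ≤ lam)
    (hρ : ρ ∈ Set.Ioo (-1 : ℝ) 1)
    (μ σ m ν u : ℝ → ℝ → ℝ)
    (hμc : ContinuousOn (fun p : ℝ × ℝ => μ p.1 p.2) (Set.Icc 0 T ×ˢ Set.univ))
    (hσc : ContinuousOn (fun p : ℝ × ℝ => σ p.1 p.2) (Set.Icc 0 T ×ˢ Set.univ))
    (hmc : ContinuousOn (fun p : ℝ × ℝ => m p.1 p.2) (Set.Icc 0 T ×ˢ Set.univ))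
    (hνc : ContinuousOn (fun p : ℝ × ℝ => ν p.1 p.2) (Set.Icc 0 T ×ˢ Set.univ))
    (huc : ContinuousOn (fun p : ℝ × ℝ => u p.1 p.2) (Set.Icc 0 T ×ˢ Set.univ))
    (hσpos : ∀ t x, 0 < σ t x)
    (φ φt φx φxx : ℝ → ℝ → ℝ)
    (hφt : ∀ t x, HasDerivAt (fun s => φ s x) (φt t x) t)
    (hφx : ∀ t x, HasDerivAt (fun y => φ t y) (φx t x) x)
    (hφxx : ∀ t x, HasDerivAt (fun y => φx t y) (φxx t x) x)
    (hφtc : Continuous (fun p : ℝ × ℝ => φt p.1 p.2))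
    (hφxc : Continuous (fun p : ℝ × ℝ => φx p.1 p.2))
    (hφxxc : Continuous (fun p : ℝ × ℝ => φxx p.1 p.2))
    (hPDE : ∀ t ∈ Set.Icc 0 T, ∀ x : ℝ,
      φt t x + (1 - γ) * r + m t x * φx t x
        + (1/2) * (ν t x)^2 * (φxx t x + (φx t x)^2)
        + (1 - γ) * ((μ t x - r) * u t x - (γ / 2) * (σ t x)^2 * (u t x)^2
            + ρ * σ t x * ν t x * u t x * φx t x) = 0)
    (hterm : ∀ x : ℝ, φ T x = 0)
    (J : ℝ → ℝ → ℝ → ℝ)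
    (hJ : ∀ t w x, J t w x =
      (w ^ (1 - γ) * Real.exp (φ t x - lam * (1 - γ) * (T - t) / 2) - 1) / (1 - γ)) :
    ∀ t ∈ Set.Ico 0 T, ∀ w : ℝ, 0 < w → ∀ x : ℝ,
      FKterm J μ σ m ν u r γ lam ρ t w x = 0 ∧
      J T w x = (w ^ (1 - γ) - 1) / (1 - γ) :=
  stmt2_general T r γ lam ρ hγ hγ1 μ σ m ν u hσpos φ φt φx φxx hφt hφx hφxx hPDE hterm J hJ
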